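/- arXiv:0907.2337 — 3 statements merged into one kernel-verified Lean document; each statement's English description precedes it below -/
import Mathlib

section
/- If θ̄ ∈ ℝ^{p−1} and θ̃ ∈ ℝ^{p−1} are both global minimizers of F, then the weighted score vectors coincide at the two minimizers: Σ_{t∈T} w_t ∇γ(θ̄; x^t) = Σ_{t∈T} w_t ∇γ(θ̃; x^t), where ∇γ(θ; x) = (x_u − tanh(⟨θ, x_{\u}⟩)) · x_{\u}. -/
/-!
Writing `s_t = ⟨θ, x^t_{\u}⟩`, the objective is `F(θ) = Σ_t w_t ℓ_t(s_t) + λ‖θ‖₁` with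
`ℓ_t(s) = log(eˢ + e⁻ˢ) - x^t_u s` strictly convex (its derivative `tanh s - x^t_u` is strictly
increasing). If two minimizers had different predictor vectors `s`, then at their midpoint the
first sum would be strictly below the average and the penalty at most the average, so `F` would
drop below its minimum. Hence all minimizers share `s`, and the score depends on `θ` only
through `s`.
-/

/-- The logistic pseudo-log-likelihood
`γ(θ; x) = x_u ⟨θ, x_{\u}⟩ - log(exp⟨θ, x_{\u}⟩ + exp(-⟨θ, x_{\u}⟩))`. -/
noncomputable def gammaLL {p : ℕ} (u : Fin p) (x : Fin p → ℝ)
    (θ : {v : Fin p // v ≠ u} → ℝ) : ℝ :=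
  x u * (∑ v, θ v * x v.1) -
    Real.log (Real.exp (∑ v, θ v * x v.1) + Real.exp (-(∑ v, θ v * x v.1)))

/-- The penalized objective `F(θ) = -Σ_t w_t γ(θ; x^t) + λ ‖θ‖₁`. -/
noncomputable def objF {p : ℕ} (u : Fin p) {ι : Type} [Fintype ι]
    (x : ι → Fin p → ℝ) (w : ι → ℝ) (lam : ℝ)
    (θ : {v : Fin p // v ≠ u} → ℝ) : ℝ :=
  -∑ t, w t * gammaLL u (x t) θ + lam * ∑ v, |θ v|

/-- `v`-th coordinate of the weighted score `Σ_t w_t (∇γ(θ; x^t))_v`,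
where `(∇γ(θ; x))_v = x_v (x_u - tanh⟨θ, x_{\u}⟩)`. -/
noncomputable def wscore {p : ℕ} (u : Fin p) {ι : Type} [Fintype ι]
    (x : ι → Fin p → ℝ) (w : ι → ℝ)
    (θ : {v : Fin p // v ≠ u} → ℝ) (v : {v : Fin p // v ≠ u}) : ℝ :=
  ∑ t, w t * (x t v.1 * (x t u - Real.tanh (∑ v', θ v' * x t v'.1)))

open Set Finset

theorem Real.tanh_strictMono : StrictMono Real.tanh := fun a b hab =>
  lt_of_not_ge fun hba => hab.not_ge <| by
    simpa only [Real.artanh_tanh] using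
      Real.artanh_le_artanh (Real.neg_one_lt_tanh b) (Real.tanh_lt_one a) hba

theorem StrictConvexOn.const_mul {E : Type*} [AddCommMonoid E] [Module ℝ E] {s : Set E}
    {f : E → ℝ} {c : ℝ} (hc : 0 < c) (hf : StrictConvexOn ℝ s f) :
    StrictConvexOn ℝ s fun z => c * f z :=
  ⟨hf.1, fun x hx y hy hxy a b ha hb hab => by
    have h := mul_lt_mul_of_pos_left (hf.2 hx hy hxy ha hb hab) hc
    simp only [smul_eq_mul] at h ⊢
    linarith⟩

section PiSum

variable {ι : Type*} [Fintype ι] {f : ι → ℝ → ℝ}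

theorem convexOn_univ_pi_sum (hf : ∀ i, ConvexOn ℝ univ (f i)) :
    ConvexOn ℝ univ fun s : ι → ℝ => ∑ i, f i (s i) :=
  ⟨convex_univ, fun x _ y _ a b ha hb hab => by
    simp only [Pi.add_apply, Pi.smul_apply, smul_eq_mul, mul_sum, ← sum_add_distrib]
    exact sum_le_sum fun i _ => (hf i).2 trivial trivial ha hb hab⟩

theorem strictConvexOn_univ_pi_sum (hf : ∀ i, StrictConvexOn ℝ univ (f i)) :
    StrictConvexOn ℝ univ fun s : ι → ℝ => ∑ i, f i (s i) :=
  ⟨convex_univ, fun x _ y _ hxy a b ha hb hab => by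
    obtain ⟨i, hi⟩ := Function.ne_iff.mp hxy
    simp only [Pi.add_apply, Pi.smul_apply, smul_eq_mul, mul_sum, ← sum_add_distrib]
    exact sum_lt_sum (fun j _ => (hf j).convexOn.2 trivial trivial ha.le hb.le hab)
      ⟨i, mem_univ i, (hf i).2 trivial trivial hi ha hb hab⟩⟩

end PiSum

theorem StrictConvexOn.map_eq_of_isMinOn_comp_add {E V : Type*} [AddCommGroup E] [Module ℝ E]
    [AddCommGroup V] [Module ℝ V] {g : V → ℝ} {h : E → ℝ} (hg : StrictConvexOn ℝ univ g)
    (hh : ConvexOn ℝ univ h) (L : E →ₗ[ℝ] V) {a b : E}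
    (ha : IsMinOn (fun z => g (L z) + h z) univ a)
    (hb : IsMinOn (fun z => g (L z) + h z) univ b) : L a = L b := by
  by_contra hne
  have half_pos : (0 : ℝ) < 2⁻¹ := by norm_num
  have half_add_half : (2⁻¹ + 2⁻¹ : ℝ) = 1 := by norm_num
  have hg_mid := hg.2 (mem_univ _) (mem_univ _) hne half_pos half_pos half_add_half
  have hh_mid := hh.2 (mem_univ a) (mem_univ b) half_pos.le half_pos.le half_add_half
  rw [← L.map_smul, ← L.map_smul, ← L.map_add] at hg_mid
  have hab := isMinOn_univ_iff.mp ha b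
  have hba := isMinOn_univ_iff.mp hb a
  have ha_mid := isMinOn_univ_iff.mp ha ((2 : ℝ)⁻¹ • a + (2 : ℝ)⁻¹ • b)
  simp only [smul_eq_mul] at hg_mid hh_mid
  linarith

noncomputable def logisticLoss (c r : ℝ) : ℝ :=
  Real.log (Real.exp r + Real.exp (-r)) - c * r

theorem hasDerivAt_logisticLoss (c r : ℝ) :
    HasDerivAt (logisticLoss c) (Real.tanh r - c) r := by
  have hsum : HasDerivAt (fun s => Real.exp s + Real.exp (-s)) (Real.exp r - Real.exp (-r)) r :=
    ((Real.hasDerivAt_exp r).add ((Real.hasDerivAt_exp (-r)).comp r (hasDerivAt_neg r))).congr_deriv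
      (by ring)
  refine ((hsum.log (by positivity)).sub ((hasDerivAt_id r).const_mul c)).congr_deriv ?_
  rw [Real.tanh_eq]
  ring

theorem strictConvexOn_logisticLoss (c : ℝ) : StrictConvexOn ℝ univ (logisticLoss c) := by
  refine StrictMono.strictConvexOn_univ_of_deriv
    (continuous_iff_continuousAt.2 fun r => (hasDerivAt_logisticLoss c r).continuousAt) ?_
  rw [funext fun r => (hasDerivAt_logisticLoss c r).deriv]
  exact fun a b hab => sub_lt_sub_right (Real.tanh_strictMono hab) c

section Model

variable {p : ℕ} {ι : Type} [Fintype ι]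

def linPred (u : Fin p) (x : ι → Fin p → ℝ) : ({v : Fin p // v ≠ u} → ℝ) →ₗ[ℝ] ι → ℝ where
  toFun θ t := ∑ v, θ v * x t v.1
  map_add' θ θ' := by
    ext t
    simp only [Pi.add_apply, add_mul, sum_add_distrib]
  map_smul' c θ := by
    ext t
    simp only [Pi.smul_apply, smul_eq_mul, mul_sum, mul_assoc, RingHom.id_apply]

theorem objF_eq_logisticLoss_linPred (u : Fin p) (x : ι → Fin p → ℝ) (w : ι → ℝ) (lam : ℝ)
    (θ : {v : Fin p // v ≠ u} → ℝ) :
    objF u x w lam θ = ∑ t, w t * logisticLoss (x t u) (linPred u x θ t) + lam * ∑ v, |θ v| := by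
  simp only [objF, gammaLL, logisticLoss, linPred, LinearMap.coe_mk, AddHom.coe_mk,
    ← sum_neg_distrib]
  congr 1
  exact sum_congr rfl fun t _ => by ring

end Model

theorem minimizers_same_score_general
    (p : ℕ) (u : Fin p) (ι : Type) [Fintype ι]
    (x : ι → Fin p → ℝ)
    (w : ι → ℝ) (hw : ∀ t, 0 < w t)
    (lam : ℝ) (hlam : 0 < lam)
    (θbar θtilde : {v : Fin p // v ≠ u} → ℝ)
    (hbar : ∀ θ', objF u x w lam θbar ≤ objF u x w lam θ')
    (htilde : ∀ θ', objF u x w lam θtilde ≤ objF u x w lam θ') :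
    ∀ v, wscore u x w θbar v = wscore u x w θtilde v := by
  have hloss : StrictConvexOn ℝ univ fun s : ι → ℝ => ∑ t, w t * logisticLoss (x t u) (s t) :=
    strictConvexOn_univ_pi_sum fun t => (strictConvexOn_logisticLoss _).const_mul (hw t)
  have hpen : ConvexOn ℝ univ fun θ : {v : Fin p // v ≠ u} → ℝ => lam * ∑ v, |θ v| :=
    (convexOn_univ_pi_sum fun _ => convexOn_univ_norm).smul hlam.le
  have hpred : linPred u x θbar = linPred u x θtilde :=
    hloss.map_eq_of_isMinOn_comp_add hpen (linPred u x)
      (isMinOn_univ_iff.mpr fun θ => by simpa only [objF_eq_logisticLoss_linPred] using hbar θ)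
      (isMinOn_univ_iff.mpr fun θ => by simpa only [objF_eq_logisticLoss_linPred] using htilde θ)
  have hpred_apply : ∀ t, ∑ v', θbar v' * x t v'.1 = ∑ v', θtilde v' * x t v'.1 := congrFun hpred
  intro v
  simp only [wscore, hpred_apply]

/-- If `θ̄` and `θ̃` are both global minimizers of `F`, then the weighted
score vectors coincide: `Σ_t w_t ∇γ(θ̄; x^t) = Σ_t w_t ∇γ(θ̃; x^t)`. -/
theorem minimizers_same_score
    (p : ℕ) (hp : 2 ≤ p) (u : Fin p) (ι : Type) [Fintype ι]
    (x : ι → Fin p → ℝ) (hx : ∀ t i, x t i = 1 ∨ x t i = -1)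
    (w : ι → ℝ) (hw : ∀ t, 0 < w t) (hw1 : ∑ t, w t = 1)
    (lam : ℝ) (hlam : 0 < lam)
    (θbar θtilde : {v : Fin p // v ≠ u} → ℝ)
    (hbar : ∀ θ', objF u x w lam θbar ≤ objF u x w lam θ')
    (htilde : ∀ θ', objF u x w lam θtilde ≤ objF u x w lam θ') :
    ∀ v, wscore u x w θbar v = wscore u x w θtilde v :=
  minimizers_same_score_general p u ι x w hw lam hlam θbar θtilde hbar htilde
end

section
/- For any θ, θ′ ∈ ℝ^{p−1}, define the Taylor remainder Δ ∈ ℝ^{p−1} by Δ := Σ_{t∈T} w_t (∇γ(θ′; x^t) − ∇γ(θ; x^t)) − [Σ_{t∈T} w_t ∇²γ(θ; x^t)](θ′ − θ). Then for every coordinate v, |Δ_v| ≤ Σ_{t∈T} w_t ⟨θ′ − θ, x^t_{\u}⟩² = (θ′ − θ)ᵀ [Σ_{t∈T} w_t x^t_{\u}(x^t_{\u})ᵀ] (θ′ − θ). In particular, if θ and θ′ are both supported on a set S of coordinates and zᵀ[Σ_{t∈T} w_t x^t_{\u}(x^t_{\u})ᵀ]z ≤ D_max‖z‖₂² for all z supported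 on S, then |Δ_v| ≤ D_max ‖θ′_S − θ_S‖₂² for every v. -/
/-!
Since `tanh' = 1 - tanh²` has derivative `-2 tanh (1 - tanh²)`, bounded by `1` in absolute value,
`tanh'` is `1`-Lipschitz, and the mean value theorem bounds the first-order Taylor remainder of
`tanh` between `a` and `b` by `(b - a)²`. Each coordinate of `Δ` is a weighted sum of such
remainders at `a = ⟨θ, x^t_{\u}⟩`, `b = ⟨θ', x^t_{\u}⟩`, multiplied by coordinates `±1`.
-/

open Real Finset Set
open scoped NNReal

theorem Real.hasDerivAt_tanh (x : ℝ) : HasDerivAt tanh (1 - tanh x ^ 2) x := by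
  have h := (hasDerivAt_sinh x).div (hasDerivAt_cosh x) (cosh_pos x).ne'
  rw [show sinh / cosh = tanh from funext fun y => (tanh_eq_sinh_div_cosh y).symm] at h
  refine h.congr_deriv ?_
  have := (cosh_pos x).ne'
  rw [tanh_eq_sinh_div_cosh]
  field_simp

theorem abs_two_mul_mul_one_sub_sq_le_one {t : ℝ} (ht : t ^ 2 ≤ 1) : |2 * t * (1 - t ^ 2)| ≤ 1 := by
  rw [abs_le]
  constructor <;> nlinarith [sq_nonneg (2 * t - 1), sq_nonneg (2 * t + 1), sq_nonneg t]

theorem Real.lipschitzWith_one_sub_tanh_sq : LipschitzWith 1 fun x => 1 - tanh x ^ 2 := by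
  have hderiv (x : ℝ) : HasDerivAt (fun x => 1 - tanh x ^ 2)
      (-(2 * tanh x * (1 - tanh x ^ 2))) x :=
    (((hasDerivAt_tanh x).pow 2).const_sub 1).congr_deriv (by ring)
  refine lipschitzWith_of_nnnorm_deriv_le (fun x => (hderiv x).differentiableAt) fun x => ?_
  rw [(hderiv x).deriv, ← NNReal.coe_le_coe, coe_nnnorm, norm_neg, Real.norm_eq_abs,
    NNReal.coe_one]
  exact abs_two_mul_mul_one_sub_sq_le_one (tanh_sq_lt_one x).le

theorem abs_sub_sub_mul_sub_le_of_lipschitzWith {f f' : ℝ → ℝ} {K : ℝ≥0}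
    (hf : ∀ x, HasDerivAt f (f' x) x) (hf' : LipschitzWith K f') (a b : ℝ) :
    |f b - f a - f' a * (b - a)| ≤ K * (b - a) ^ 2 := by
  have hderiv (x : ℝ) : HasDerivAt (fun x => f x - f' a * x) (f' x - f' a) x :=
    (hf x).sub (by simpa using (hasDerivAt_id x).const_mul (f' a))
  have hbound : ∀ x ∈ uIcc a b, ‖f' x - f' a‖ ≤ K * |b - a| := fun x hx =>
    (hf'.dist_le_mul x a).trans (by gcongr; exact abs_sub_left_of_mem_uIcc hx)
  have := Convex.norm_image_sub_le_of_norm_hasDerivWithin_le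
    (fun x _ => (hderiv x).hasDerivWithinAt) hbound (convex_uIcc a b) left_mem_uIcc right_mem_uIcc
  rw [Real.norm_eq_abs, Real.norm_eq_abs] at this
  calc |f b - f a - f' a * (b - a)| = |f b - f' a * b - (f a - f' a * a)| := by ring_nf
    _ ≤ K * |b - a| * |b - a| := this
    _ = K * (b - a) ^ 2 := by rw [mul_assoc, ← abs_mul, ← sq, abs_sq]

theorem Real.abs_tanh_sub_tanh_sub_mul_sub_le (a b : ℝ) :
    |tanh b - tanh a - (1 - tanh a ^ 2) * (b - a)| ≤ (b - a) ^ 2 := by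
  simpa using abs_sub_sub_mul_sub_le_of_lipschitzWith hasDerivAt_tanh
    lipschitzWith_one_sub_tanh_sq a b

theorem abs_sum_tanh_remainder_le {ι : Type*} (s : Finset ι) {w c y a b : ι → ℝ}
    (hw : ∀ t, 0 ≤ w t) (hc : ∀ t, |c t| ≤ 1) :
    |∑ t ∈ s, w t * (c t * (y t - tanh (b t)) - c t * (y t - tanh (a t))) -
        ∑ t ∈ s, w t * (-(1 - tanh (a t) ^ 2) * (c t * (b t - a t)))| ≤
      ∑ t ∈ s, w t * (b t - a t) ^ 2 := by
  rw [← sum_sub_distrib]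
  refine (abs_sum_le_sum_abs _ _).trans (sum_le_sum fun t _ => ?_)
  calc _ = w t * (|c t| * |tanh (b t) - tanh (a t) - (1 - tanh (a t) ^ 2) * (b t - a t)|) := by
        rw [← abs_of_nonneg (hw t), ← abs_mul, ← abs_mul, abs_of_nonneg (hw t), ← abs_neg]
        ring_nf
    _ ≤ w t * (1 * (b t - a t) ^ 2) := by
        gcongr
        exacts [hw t, hc t, abs_tanh_sub_tanh_sub_mul_sub_le _ _]
    _ = w t * (b t - a t) ^ 2 := by rw [one_mul]

theorem sum_mul_sq_sum_mul_eq_sum_sum {ι κ : Type*} [Fintype κ] (s : Finset ι) (w : ι → ℝ)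
    (y : ι → κ → ℝ) (z : κ → ℝ) :
    ∑ t ∈ s, w t * (∑ i, z i * y t i) ^ 2 =
      ∑ i, ∑ j, z i * (∑ t ∈ s, w t * (y t i * y t j)) * z j := by
  simp only [sq, mul_sum, sum_mul]
  rw [sum_comm]
  refine sum_congr rfl fun i _ => ?_
  rw [sum_comm]
  refine sum_congr rfl fun j _ => sum_congr rfl fun t _ => ?_
  ring

theorem taylor_remainder_bound_general
    (p : ℕ) (u : Fin p) (ι : Type) [Fintype ι]
    (x : ι → Fin p → ℝ) (hx : ∀ t i, x t i = 1 ∨ x t i = -1)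
    (w : ι → ℝ) (hw : ∀ t, 0 < w t)
    (θ θ' : {v : Fin p // v ≠ u} → ℝ)
    (Δ : {v : Fin p // v ≠ u} → ℝ)
    (hΔ : ∀ v, Δ v =
      ∑ t, w t *
          (x t v.1 * (x t u - Real.tanh (∑ v', θ' v' * x t v'.1)) -
            x t v.1 * (x t u - Real.tanh (∑ v', θ v' * x t v'.1))) -
        ∑ t, w t *
          (-(1 - Real.tanh (∑ v', θ v' * x t v'.1) ^ 2) *
            (x t v.1 * ∑ v', (θ' v' - θ v') * x t v'.1))) :
    (∀ v, |Δ v| ≤ ∑ t, w t * (∑ v', (θ' v' - θ v') * x t v'.1) ^ 2) ∧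
    (∑ t, w t * (∑ v', (θ' v' - θ v') * x t v'.1) ^ 2 =
      ∑ a, ∑ b, (θ' a - θ a) * (∑ t, w t * (x t a.1 * x t b.1)) * (θ' b - θ b)) ∧
    (∀ S : Finset {v : Fin p // v ≠ u}, ∀ Dmax : ℝ,
      (∀ v ∉ S, θ v = 0) → (∀ v ∉ S, θ' v = 0) →
      (∀ z : {v : Fin p // v ≠ u} → ℝ, (∀ v ∉ S, z v = 0) →
        ∑ t, w t * (∑ v', z v' * x t v'.1) ^ 2 ≤ Dmax * ∑ v', (z v') ^ 2) →
      ∀ v, |Δ v| ≤ Dmax * ∑ v' ∈ S, (θ' v' - θ v') ^ 2) := by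
  have hsub (t : ι) : ∑ v', (θ' v' - θ v') * x t v'.1 =
      ∑ v', θ' v' * x t v'.1 - ∑ v', θ v' * x t v'.1 := by
    simp only [sub_mul, sum_sub_distrib]
  have hbound (v : {v : Fin p // v ≠ u}) :
      |Δ v| ≤ ∑ t, w t * (∑ v', (θ' v' - θ v') * x t v'.1) ^ 2 := by
    have hxv (t : ι) : |x t v.1| ≤ 1 := by rcases hx t v.1 with h | h <;> simp [h]
    simpa only [hΔ v, ← hsub] using
      abs_sum_tanh_remainder_le univ (fun t => (hw t).le) hxv (y := fun t => x t u)
        (a := fun t => ∑ v', θ v' * x t v'.1) (b := fun t => ∑ v', θ' v' * x t v'.1)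
  refine ⟨hbound, sum_mul_sq_sum_mul_eq_sum_sum _ _ _ _, fun S Dmax hθ hθ' hquad v => ?_⟩
  have hS : ∀ v' ∉ S, θ' v' - θ v' = 0 := fun v' hv' => by rw [hθ v' hv', hθ' v' hv', sub_zero]
  calc |Δ v| ≤ ∑ t, w t * (∑ v', (θ' v' - θ v') * x t v'.1) ^ 2 := hbound v
    _ ≤ Dmax * ∑ v', (θ' v' - θ v') ^ 2 := hquad _ hS
    _ = Dmax * ∑ v' ∈ S, (θ' v' - θ v') ^ 2 := by
      rw [sum_subset (subset_univ S) fun v' _ hv' => by rw [hS v' hv', sq, zero_mul]]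

/-- The Taylor remainder
`Δ = Σ_t w_t (∇γ(θ'; x^t) - ∇γ(θ; x^t)) - [Σ_t w_t ∇²γ(θ; x^t)](θ' - θ)`
satisfies, for every coordinate `v`,
`|Δ_v| ≤ Σ_t w_t ⟨θ' - θ, x^t_{\u}⟩² = (θ'-θ)ᵀ [Σ_t w_t x^t_{\u}(x^t_{\u})ᵀ] (θ'-θ)`.
In particular, if `θ, θ'` are supported on `S` and the quadratic form of
`Σ_t w_t x^t_{\u}(x^t_{\u})ᵀ` is bounded by `D_max` on vectors supported on `S`, then
`|Δ_v| ≤ D_max ‖θ'_S - θ_S‖₂²` for every `v`. -/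
theorem taylor_remainder_bound
    (p : ℕ) (hp : 2 ≤ p) (u : Fin p) (ι : Type) [Fintype ι]
    (x : ι → Fin p → ℝ) (hx : ∀ t i, x t i = 1 ∨ x t i = -1)
    (w : ι → ℝ) (hw : ∀ t, 0 < w t) (hw1 : ∑ t, w t = 1)
    (θ θ' : {v : Fin p // v ≠ u} → ℝ)
    (Δ : {v : Fin p // v ≠ u} → ℝ)
    (hΔ : ∀ v, Δ v =
      ∑ t, w t *
          (x t v.1 * (x t u - Real.tanh (∑ v', θ' v' * x t v'.1)) -
            x t v.1 * (x t u - Real.tanh (∑ v', θ v' * x t v'.1))) -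
        ∑ t, w t *
          (-(1 - Real.tanh (∑ v', θ v' * x t v'.1) ^ 2) *
            (x t v.1 * ∑ v', (θ' v' - θ v') * x t v'.1))) :
    (∀ v, |Δ v| ≤ ∑ t, w t * (∑ v', (θ' v' - θ v') * x t v'.1) ^ 2) ∧
    (∑ t, w t * (∑ v', (θ' v' - θ v') * x t v'.1) ^ 2 =
      ∑ a, ∑ b, (θ' a - θ a) * (∑ t, w t * (x t a.1 * x t b.1)) * (θ' b - θ b)) ∧
    (∀ S : Finset {v : Fin p // v ≠ u}, ∀ Dmax : ℝ,
      (∀ v ∉ S, θ v = 0) → (∀ v ∉ S, θ' v = 0) →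
      (∀ z : {v : Fin p // v ≠ u} → ℝ, (∀ v ∉ S, z v = 0) →
        ∑ t, w t * (∑ v', z v' * x t v'.1) ^ 2 ≤ Dmax * ∑ v', (z v') ^ 2) →
      ∀ v, |Δ v| ≤ Dmax * ∑ v' ∈ S, (θ' v' - θ v') ^ 2) :=
  taylor_remainder_bound_general p u ι x hx w hw θ θ' Δ hΔ
end

section
/- Let S ⊆ {1,…,p−1} with complement S^c, let Q be a (p−1)×(p−1) real matrix whose block Q_{SS} is invertible, let W ∈ ℝ^{p−1}, let λ > 0, let 0 < α ≤ 1, and let θ* ∈ ℝ^{p−1} be supported on S with θ*_v ≠ 0 for all v ∈ S. Assume: (i) for every v ∈ S, |(Q_{SS}^{−1}(λ·sign(θ*_S) + W_S))_v| < |θ*_v|; (ii) the matrix ∞-operator norm satisfies ‖Q_{S^cS} Q_{SS}^{−1}‖_{∞} ≤ 1 − α/2; and (iii) for every v ∈ S^c, |(W_{S^c} − Q_{S^cS} Q_{SS}^{−1} W_S)_v| < (α/2)λ. Define θ̄ ∈ ℝ^{p−1} by θ̄_S := θ*_S − Q_{SS}^{−1}(λ·sign(θ*_S) + W_S) and θ̄_{S^c}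 := 0. Then: sign(θ̄_v) = sign(θ*_v) for every v; Q_{SS}(θ̄_S − θ*_S) + W_S = −λ·sign(θ̄_S); and ‖Q_{S^cS}(θ̄_S − θ*_S) + W_{S^c}‖_∞ < λ. -/
/-!
On `S` the witness is `θ*_S - Q_{SS}⁻¹ (λ sign θ*_S + W_S)`, so the stationarity equation on `S`
is immediate, and (i) says the correction is smaller than `|θ*_v|`, which cannot flip a sign.
Off `S`, writing `B = Q_{S^cS} Q_{SS}⁻¹`, the dual residual equals
`(W_{S^c} - B W_S) - λ B sign θ*_S`; the first term is below `(α/2) λ` by (iii), and the second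
is at most `λ (1 - α/2)` by (ii) since signs are bounded by `1`.
-/

open Matrix

namespace Real

lemma abs_sign_le_one (x : ℝ) : |Real.sign x| ≤ 1 := by
  rcases sign_apply_eq x with h | h | h <;> simp [h]

lemma sign_sub_of_abs_lt {t u : ℝ} (h : |u| < |t|) : Real.sign (t - u) = Real.sign t := by
  rcases lt_trichotomy t 0 with ht | rfl | ht
  · rw [abs_of_neg ht] at h
    rw [sign_of_neg ht, sign_of_neg (by linarith [neg_abs_le u])]
  · exact absurd h (by simp)
  · rw [abs_of_pos ht] at h
    rw [sign_of_pos ht, sign_of_pos (by linarith [le_abs_self u])]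

end Real

namespace Matrix

variable {m n : Type*} [Fintype n]

lemma abs_mulVec_apply_le (B : Matrix m n ℝ) {x : n → ℝ} {c : ℝ} (hx : ∀ j, |x j| ≤ c) (i : m) :
    |(B *ᵥ x) i| ≤ (∑ j, |B i j|) * c := by
  rw [Finset.sum_mul]
  calc |(B *ᵥ x) i| ≤ ∑ j, |B i j * x j| := Finset.abs_sum_le_sum_abs _ _
    _ ≤ ∑ j, |B i j| * c := Finset.sum_le_sum fun j _ => by
        rw [abs_mul]; exact mul_le_mul_of_nonneg_left (hx j) (abs_nonneg _)

variable [DecidableEq n]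

lemma mulVec_inv_mulVec {A : Matrix n n ℝ} (hA : IsUnit A.det) (s : n → ℝ) :
    A *ᵥ (A⁻¹ *ᵥ s) = s := by
  rw [mulVec_mulVec, mul_nonsing_inv A hA, one_mulVec]

lemma abs_mulVec_neg_inv_mulVec_add_lt (A : Matrix n n ℝ) (M : Matrix m n ℝ)
    {σ w : n → ℝ} {w' : m → ℝ} {lam κ : ℝ} (hlam : 0 ≤ lam) (hσ : ∀ j, |σ j| ≤ 1) (i : m)
    (hrow : ∑ j, |(M * A⁻¹) i j| ≤ 1 - κ) (hw : |w' i - ((M * A⁻¹) *ᵥ w) i| < κ * lam) :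
    |(M *ᵥ -(A⁻¹ *ᵥ fun j => lam * σ j + w j)) i + w' i| < lam := by
  have hsplit : (M *ᵥ -(A⁻¹ *ᵥ fun j => lam * σ j + w j)) i + w' i
      = (w' i - ((M * A⁻¹) *ᵥ w) i) - lam * ((M * A⁻¹) *ᵥ σ) i := by
    have hs : (fun j => lam * σ j + w j) = lam • σ + w := rfl
    rw [mulVec_neg, mulVec_mulVec, hs, mulVec_add, mulVec_smul]
    simp only [Pi.neg_apply, Pi.add_apply, Pi.smul_apply, smul_eq_mul]
    ring
  have hσrow : lam * |((M * A⁻¹) *ᵥ σ) i| ≤ lam * (1 - κ) :=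
    mul_le_mul_of_nonneg_left
      ((abs_mulVec_apply_le _ hσ i).trans (by rw [mul_one]; exact hrow)) hlam
  rw [hsplit]
  calc _ ≤ |w' i - ((M * A⁻¹) *ᵥ w) i| + |lam * ((M * A⁻¹) *ᵥ σ) i| := abs_sub _ _
    _ < κ * lam + lam * (1 - κ) := by rw [abs_mul, abs_of_nonneg hlam]; linarith
    _ = lam := by ring

end Matrix

theorem primal_dual_witness_general
    (p : ℕ) (S : Finset (Fin (p - 1)))
    (Q : Matrix (Fin (p - 1)) (Fin (p - 1)) ℝ)
    (W : Fin (p - 1) → ℝ) (lam : ℝ) (hlam : 0 < lam)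
    (α : ℝ)
    (θstar : Fin (p - 1) → ℝ)
    (hsupp : ∀ v ∉ S, θstar v = 0)
    -- `Q_{SS}` is invertible
    (hdet : IsUnit (Q.submatrix (fun a : {v : Fin (p - 1) // v ∈ S} => a.1)
        (fun b : {v : Fin (p - 1) // v ∈ S} => b.1)).det)
    -- (i) `|(Q_{SS}⁻¹(λ sign(θ*_S) + W_S))_v| < |θ*_v|` for all `v ∈ S`
    (hi : ∀ v : {v : Fin (p - 1) // v ∈ S},
      |((Q.submatrix (fun a : {v : Fin (p - 1) // v ∈ S} => a.1)
            (fun b : {v : Fin (p - 1) // v ∈ S} => b.1))⁻¹ *ᵥ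
          (fun b : {v : Fin (p - 1) // v ∈ S} => lam * Real.sign (θstar b.1) + W b.1)) v|
        < |θstar v.1|)
    -- (ii) `‖Q_{S^cS} Q_{SS}⁻¹‖_∞ ≤ 1 - α/2` (maximum absolute row sum)
    (hii : ∀ a : {v : Fin (p - 1) // v ∉ S},
      ∑ b : {v : Fin (p - 1) // v ∈ S},
        |(Q.submatrix (fun a : {v : Fin (p - 1) // v ∉ S} => a.1)
              (fun b : {v : Fin (p - 1) // v ∈ S} => b.1) *
            (Q.submatrix (fun a : {v : Fin (p - 1) // v ∈ S} => a.1)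
              (fun b : {v : Fin (p - 1) // v ∈ S} => b.1))⁻¹) a b|
        ≤ 1 - α / 2)
    -- (iii) `|(W_{S^c} - Q_{S^cS} Q_{SS}⁻¹ W_S)_v| < (α/2)λ` for all `v ∈ S^c`
    (hiii : ∀ v : {v : Fin (p - 1) // v ∉ S},
      |W v.1 - ((Q.submatrix (fun a : {v : Fin (p - 1) // v ∉ S} => a.1)
              (fun b : {v : Fin (p - 1) // v ∈ S} => b.1) *
            (Q.submatrix (fun a : {v : Fin (p - 1) // v ∈ S} => a.1)
              (fun b : {v : Fin (p - 1) // v ∈ S} => b.1))⁻¹) *ᵥ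
          (fun b : {v : Fin (p - 1) // v ∈ S} => W b.1)) v|
        < α / 2 * lam)
    -- the witness `θ̄`
    (θbar : Fin (p - 1) → ℝ)
    (hθbar : ∀ v, θbar v =
      if h : v ∈ S then
        θstar v -
          ((Q.submatrix (fun a : {v : Fin (p - 1) // v ∈ S} => a.1)
                (fun b : {v : Fin (p - 1) // v ∈ S} => b.1))⁻¹ *ᵥ
              (fun b : {v : Fin (p - 1) // v ∈ S} =>
                lam * Real.sign (θstar b.1) + W b.1)) ⟨v, h⟩
      else 0) :
    (∀ v, Real.sign (θbar v) = Real.sign (θstar v)) ∧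
    (∀ v : {v : Fin (p - 1) // v ∈ S},
      (Q.submatrix (fun a : {v : Fin (p - 1) // v ∈ S} => a.1)
            (fun b : {v : Fin (p - 1) // v ∈ S} => b.1) *ᵥ
          (fun b : {v : Fin (p - 1) // v ∈ S} => θbar b.1 - θstar b.1)) v + W v.1
        = -(lam * Real.sign (θbar v.1))) ∧
    (∀ v : {v : Fin (p - 1) // v ∉ S},
      |(Q.submatrix (fun a : {v : Fin (p - 1) // v ∉ S} => a.1)
            (fun b : {v : Fin (p - 1) // v ∈ S} => b.1) *ᵥ
          (fun b : {v : Fin (p - 1) // v ∈ S} => θbar b.1 - θstar b.1)) v + W v.1|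
        < lam) := by
  set A := Q.submatrix (fun a : {v : Fin (p - 1) // v ∈ S} => a.1)
    (fun b : {v : Fin (p - 1) // v ∈ S} => b.1)
  set u := A⁻¹ *ᵥ fun b : {v : Fin (p - 1) // v ∈ S} => lam * Real.sign (θstar b.1) + W b.1
  have hθS (b : {v : Fin (p - 1) // v ∈ S}) : θbar b.1 = θstar b.1 - u b := by
    rw [hθbar, dif_pos b.2]
  have hsign (v : Fin (p - 1)) : Real.sign (θbar v) = Real.sign (θstar v) := by
    by_cases hv : v ∈ S
    · rw [hθS ⟨v, hv⟩]
      exact Real.sign_sub_of_abs_lt (hi ⟨v, hv⟩)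
    · rw [hθbar, dif_neg hv, hsupp v hv]
  have hΔ : (fun b : {v : Fin (p - 1) // v ∈ S} => θbar b.1 - θstar b.1) = -u := by
    funext b
    rw [hθS, Pi.neg_apply]
    ring
  refine ⟨hsign, fun v => ?_, fun v => ?_⟩
  · rw [hΔ, mulVec_neg, mulVec_inv_mulVec hdet, hsign, Pi.neg_apply]
    ring
  · rw [hΔ]
    exact abs_mulVec_neg_inv_mulVec_add_lt A _ (w' := fun a => W a.1) hlam.le
      (fun _ => Real.abs_sign_le_one _) v (hii v) (hiii v)

/-- the primal-dual witness construction. With `Q_{SS}` invertible,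
`θ*` supported on `S` with nonzero entries on `S`, hypotheses (i)–(iii), and
`θ̄_S = θ*_S - Q_{SS}⁻¹(λ sign(θ*_S) + W_S)`, `θ̄_{S^c} = 0`, we get
`sign(θ̄) = sign(θ*)`, `Q_{SS}(θ̄_S - θ*_S) + W_S = -λ sign(θ̄_S)`, and
`‖Q_{S^cS}(θ̄_S - θ*_S) + W_{S^c}‖_∞ < λ`. -/
theorem primal_dual_witness
    (p : ℕ) (hp : 2 ≤ p) (S : Finset (Fin (p - 1)))
    (Q : Matrix (Fin (p - 1)) (Fin (p - 1)) ℝ)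
    (W : Fin (p - 1) → ℝ) (lam : ℝ) (hlam : 0 < lam)
    (α : ℝ) (hα0 : 0 < α) (hα1 : α ≤ 1)
    (θstar : Fin (p - 1) → ℝ)
    (hsupp : ∀ v ∉ S, θstar v = 0) (hnz : ∀ v ∈ S, θstar v ≠ 0)
    -- `Q_{SS}` is invertible
    (hdet : IsUnit (Q.submatrix (fun a : {v : Fin (p - 1) // v ∈ S} => a.1)
        (fun b : {v : Fin (p - 1) // v ∈ S} => b.1)).det)
    -- (i) `|(Q_{SS}⁻¹(λ sign(θ*_S) + W_S))_v| < |θ*_v|` for all `v ∈ S`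
    (hi : ∀ v : {v : Fin (p - 1) // v ∈ S},
      |((Q.submatrix (fun a : {v : Fin (p - 1) // v ∈ S} => a.1)
            (fun b : {v : Fin (p - 1) // v ∈ S} => b.1))⁻¹ *ᵥ
          (fun b : {v : Fin (p - 1) // v ∈ S} => lam * Real.sign (θstar b.1) + W b.1)) v|
        < |θstar v.1|)
    -- (ii) `‖Q_{S^cS} Q_{SS}⁻¹‖_∞ ≤ 1 - α/2` (maximum absolute row sum)
    (hii : ∀ a : {v : Fin (p - 1) // v ∉ S},
      ∑ b : {v : Fin (p - 1) // v ∈ S},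
        |(Q.submatrix (fun a : {v : Fin (p - 1) // v ∉ S} => a.1)
              (fun b : {v : Fin (p - 1) // v ∈ S} => b.1) *
            (Q.submatrix (fun a : {v : Fin (p - 1) // v ∈ S} => a.1)
              (fun b : {v : Fin (p - 1) // v ∈ S} => b.1))⁻¹) a b|
        ≤ 1 - α / 2)
    -- (iii) `|(W_{S^c} - Q_{S^cS} Q_{SS}⁻¹ W_S)_v| < (α/2)λ` for all `v ∈ S^c`
    (hiii : ∀ v : {v : Fin (p - 1) // v ∉ S},
      |W v.1 - ((Q.submatrix (fun a : {v : Fin (p - 1) // v ∉ S} => a.1)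
              (fun b : {v : Fin (p - 1) // v ∈ S} => b.1) *
            (Q.submatrix (fun a : {v : Fin (p - 1) // v ∈ S} => a.1)
              (fun b : {v : Fin (p - 1) // v ∈ S} => b.1))⁻¹) *ᵥ
          (fun b : {v : Fin (p - 1) // v ∈ S} => W b.1)) v|
        < α / 2 * lam)
    -- the witness `θ̄`
    (θbar : Fin (p - 1) → ℝ)
    (hθbar : ∀ v, θbar v =
      if h : v ∈ S then
        θstar v -
          ((Q.submatrix (fun a : {v : Fin (p - 1) // v ∈ S} => a.1)
                (fun b : {v : Fin (p - 1) // v ∈ S} => b.1))⁻¹ *ᵥ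
              (fun b : {v : Fin (p - 1) // v ∈ S} =>
                lam * Real.sign (θstar b.1) + W b.1)) ⟨v, h⟩
      else 0) :
    (∀ v, Real.sign (θbar v) = Real.sign (θstar v)) ∧
    (∀ v : {v : Fin (p - 1) // v ∈ S},
      (Q.submatrix (fun a : {v : Fin (p - 1) // v ∈ S} => a.1)
            (fun b : {v : Fin (p - 1) // v ∈ S} => b.1) *ᵥ
          (fun b : {v : Fin (p - 1) // v ∈ S} => θbar b.1 - θstar b.1)) v + W v.1
        = -(lam * Real.sign (θbar v.1))) ∧
    (∀ v : {v : Fin (p - 1) // v ∉ S},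
      |(Q.submatrix (fun a : {v : Fin (p - 1) // v ∉ S} => a.1)
            (fun b : {v : Fin (p - 1) // v ∈ S} => b.1) *ᵥ
          (fun b : {v : Fin (p - 1) // v ∈ S} => θbar b.1 - θstar b.1)) v + W v.1|
        < lam) :=
  primal_dual_witness_general p S Q W lam hlam α θstar hsupp hdet hi hii hiii θbar hθbar
end
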